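/- arXiv:2303.17551 — 7 statements merged into one kernel-verified Lean document; each statement's English description precedes it below -/
import Mathlib

section
/- The DTPR-max algorithm is ω-competitive for the online pause and resume maximization problem: for every price sequence c_1, …, c_T with c_t ∈ [L, U] for all t, the decisions produced by DTPR-max form a feasible solution (they sum to k), and OPT(c) is at most ω times the profit of DTPR-max on c. -/
open Finset

/-- A feasible solution: binary decisions with `x 0 = 0`, `x (T+1) = 0`,
and exactly `k` accepted prices among times `1, …, T`. -/
def Feasible (T k : ℕ) (x : ℕ → ℕ) : Prop :=
  (∀ t, x t ≤ 1) ∧ x 0 = 0 ∧ x (T + 1) = 0 ∧ (∑ t ∈ Finset.Icc 1 T, x t) = k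

/-- Profit of a solution: accepted prices minus switching costs. -/
noncomputable def profit (β : ℝ) (T : ℕ) (c : ℕ → ℝ) (x : ℕ → ℕ) : ℝ :=
  (∑ t ∈ Finset.Icc 1 T, c t * (x t : ℝ))
    - β * ∑ t ∈ Finset.Icc 1 (T + 1), |(x t : ℝ) - (x (t - 1) : ℝ)|

/-- Offline optimum of the maximization problem. -/
noncomputable def OPTmax (β : ℝ) (T k : ℕ) (c : ℕ → ℝ) : ℝ :=
  sSup {v : ℝ | ∃ x : ℕ → ℕ, Feasible T k x ∧ profit β T c x = v}

/-- DTPR-max threshold values `ℓ_i`. -/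
noncomputable def lMax (L β ω : ℝ) (k : ℕ) (i : ℕ) : ℝ :=
  L * (1 + (ω - 1) * (1 + ω / (k : ℝ)) ^ (i - 1))
    - 2 * β * (ω / (k : ℝ) - 1 / (k : ℝ) + 1) * (1 + ω / (k : ℝ)) ^ (i - 1)

/-- DTPR-max threshold values `u_i = ℓ_i + 2β`. -/
noncomputable def uMax (L β ω : ℝ) (k : ℕ) (i : ℕ) : ℝ :=
  lMax L β ω k i + 2 * β

/-- The state of DTPR-max after processing time `t`:
the decision `x_t` and the counter `i` after time `t` (initially `(0, 1)`).
When the previous decision was `0` it accepts iff `c_t ≥ u_i`;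
when the previous decision was `1` it accepts iff `c_t ≥ ℓ_i`. -/
noncomputable def dtprMaxState (k T : ℕ) (ℓ u : ℕ → ℝ) (c : ℕ → ℝ) : ℕ → ℕ × ℕ
  | 0 => (0, 1)
  | t + 1 =>
    let p := dtprMaxState k T ℓ u c t
    if k < p.2 then (0, p.2)
    else if (T : ℤ) - ((t : ℤ) + 1) ≤ (k : ℤ) - (p.2 : ℤ) then (1, p.2 + 1)
    else if p.1 = 0 then
      if u p.2 ≤ c (t + 1) then (1, p.2 + 1) else (0, p.2)
    else
      if ℓ p.2 ≤ c (t + 1) then (1, p.2 + 1) else (0, p.2)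

/-- The decisions of DTPR-max. -/
noncomputable def dtprMaxX (k T : ℕ) (ℓ u : ℕ → ℝ) (c : ℕ → ℝ) (t : ℕ) : ℕ :=
  (dtprMaxState k T ℓ u c t).1

/-!
Let `τ` be the first time at which the deadline binds and `i = i_τ`. Up to `τ`, DTPR-max decides by
its thresholds: an accepted price beats its threshold (an acceptance from idle pays
`u_j = ℓ_j + 2β`, covering both switches of the run it opens), and a rejected price lies below
`u_i`. After `τ` it accepts every remaining price, each at least `L`, paying at most one more
switch-on. Measuring prices by their excess over `u_i`, DTPR-max thus earns at least
`∑_{j<i} ℓ_j + (k + 1 - i)·L - 2β` plus the total excess, whereas a feasible solution, which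
switches at least twice, earns at most `k·u_i - 2β` plus the total excess. Equation (4) is what
makes `k·u_i - 2β = ω·(∑_{j<i} ℓ_j + (k + 1 - i)·L - 2β)` hold for every `i ≥ 1`, and `ω > 1`.
-/

/-- Profit collected up to time `t`; the last term prepays switching off a run still open at `t`. -/
noncomputable def profitUpTo (β : ℝ) (c : ℕ → ℝ) (x : ℕ → ℕ) (t : ℕ) : ℝ :=
  (∑ j ∈ Icc 1 t, c j * (x j : ℝ)) - β * ∑ j ∈ Icc 1 t, |(x j : ℝ) - (x (j - 1) : ℝ)|
    - β * (x t : ℝ)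

section ProfitUpTo

variable {β : ℝ} {c : ℕ → ℝ} {x : ℕ → ℕ}

theorem profitUpTo_zero (hx : x 0 = 0) : profitUpTo β c x 0 = 0 := by
  simp [profitUpTo, hx]

theorem profitUpTo_succ {t : ℕ} (hx : x t ≤ 1) (hx' : x (t + 1) ≤ 1) :
    profitUpTo β c x (t + 1)
      = profitUpTo β c x t + x (t + 1) * (c (t + 1) - 2 * β * (1 - x t)) := by
  unfold profitUpTo
  rw [sum_Icc_succ_top (by omega), sum_Icc_succ_top (by omega), Nat.add_sub_cancel]
  interval_cases x t <;> interval_cases x (t + 1) <;> norm_num <;> ring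

theorem profit_eq_profitUpTo {T : ℕ} (hT : x (T + 1) = 0) :
    profit β T c x = profitUpTo β c x T := by
  rw [profit, profitUpTo, sum_Icc_succ_top (by omega), Nat.add_sub_cancel, hT]
  simp only [Nat.cast_zero, zero_sub, abs_neg, Nat.abs_cast]
  ring

end ProfitUpTo

theorem sum_Icc_abs_sub_eq_sum_dist (y : ℕ → ℝ) (n : ℕ) :
    ∑ t ∈ Icc 1 (n + 1), |y t - y (t - 1)| = ∑ t ∈ Ico 0 (n + 1), dist (y t) (y (t + 1)) := by
  have h : Icc 1 (n + 1) = Ico (0 + 1) (n + 1 + 1) := by ext; simp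
  rw [h, ← Finset.sum_Ico_add']
  refine Finset.sum_congr rfl fun t _ => ?_
  rw [Real.dist_eq, abs_sub_comm, Nat.add_sub_cancel]

theorem two_le_sum_abs_sub_of_feasible {T k : ℕ} {y : ℕ → ℕ} (hk : 1 ≤ k) (hy : Feasible T k y) :
    2 ≤ ∑ t ∈ Icc 1 (T + 1), |(y t : ℝ) - (y (t - 1) : ℝ)| := by
  obtain ⟨hy1, hy0, hyT, hys⟩ := hy
  obtain ⟨s, hs, hys0⟩ : ∃ s ∈ Icc 1 T, y s ≠ 0 := by
    by_contra! h
    rw [sum_eq_zero h] at hys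
    omega
  have hs1 : y s = 1 := by have := hy1 s; omega
  rw [mem_Icc] at hs
  let z : ℕ → ℝ := fun t => y t
  rw [sum_Icc_abs_sub_eq_sum_dist z, ← sum_Ico_consecutive _ (Nat.zero_le s) (by omega : s ≤ T + 1)]
  have h₁ := dist_le_Ico_sum_dist z (Nat.zero_le s)
  have h₂ := dist_le_Ico_sum_dist z (by omega : s ≤ T + 1)
  have hd₁ : dist (z 0) (z s) = 1 := by simp [z, hy0, hs1]
  have hd₂ : dist (z s) (z (T + 1)) = 1 := by simp [z, hyT, hs1]
  linarith

theorem profit_le_of_feasible {β : ℝ} {T k : ℕ} {c : ℕ → ℝ} {y : ℕ → ℕ} (hβ : 0 ≤ β) (hk : 1 ≤ k)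
    (hy : Feasible T k y) (θ : ℝ) :
    profit β T c y ≤ k * θ - 2 * β + ∑ t ∈ Icc 1 T, max (c t - θ) 0 := by
  have hprices : ∑ t ∈ Icc 1 T, c t * (y t : ℝ) ≤ ∑ t ∈ Icc 1 T, (θ * y t + max (c t - θ) 0) := by
    refine sum_le_sum fun t _ => ?_
    rcases Nat.le_one_iff_eq_zero_or_eq_one.1 (hy.1 t) with h | h
    · simp [h]
    · simp only [h, Nat.cast_one, mul_one]
      linarith [le_max_left (c t - θ) 0]
  have hcount : ∑ t ∈ Icc 1 T, (θ * y t : ℝ) = k * θ := by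
    rw [← mul_sum, ← Nat.cast_sum, hy.2.2.2, mul_comm]
  rw [sum_add_distrib, hcount] at hprices
  have hswitch := mul_le_mul_of_nonneg_left (two_le_sum_abs_sub_of_feasible hk hy) hβ
  unfold profit
  linarith

section Thresholds

variable {L U β ω : ℝ} {k : ℕ}

theorem lMax_eq_add (i : ℕ) :
    lMax L β ω k i
      = L + (L * (ω - 1) - 2 * β * (ω / k - 1 / k + 1)) * (1 + ω / k) ^ (i - 1) := by
  unfold lMax; ring

theorem threshold_scale_pos (hβUL : 2 * β < U - L) (hω : 0 < ω)
    (heq : U - L - 2 * β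
      = (L * (ω - 1) - 2 * β * (1 - 1 / (k : ℝ) + ω / (k : ℝ))) * (1 + ω / (k : ℝ)) ^ k) :
    0 < L * (ω - 1) - 2 * β * (ω / k - 1 / k + 1) := by
  have hρ : 0 < (1 + ω / (k : ℝ)) ^ k := by positivity
  have : 0 < (L * (ω - 1) - 2 * β * (1 - 1 / (k : ℝ) + ω / (k : ℝ))) * (1 + ω / (k : ℝ)) ^ k := by
    linarith
  have := pos_of_mul_pos_left this hρ.le
  linarith

theorem one_lt_of_threshold_scale_pos (hL : 0 ≤ L) (hβ : 0 ≤ β) (hω : 0 ≤ ω) (hk : 1 ≤ k)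
    (hA : 0 < L * (ω - 1) - 2 * β * (ω / k - 1 / k + 1)) : 1 < ω := by
  by_contra! hω1
  have hk' : (1 : ℝ) ≤ k := by exact_mod_cast hk
  have hfactor : 0 ≤ ω / k - 1 / k + 1 := by
    rw [div_sub_div_same]
    have : -1 ≤ (ω - 1) / k := by
      rw [le_div_iff₀ (by linarith)]; linarith
    linarith
  nlinarith [mul_nonneg hβ hfactor, mul_nonpos_of_nonneg_of_nonpos hL (sub_nonpos.2 hω1)]

theorem monotone_lMax (hA : 0 ≤ L * (ω - 1) - 2 * β * (ω / k - 1 / k + 1)) (hω : 0 ≤ ω) :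
    Monotone (lMax L β ω k) := by
  intro i j hij
  simp only [lMax_eq_add]
  gcongr
  exact le_add_of_nonneg_right (by positivity)

theorem monotone_uMax (hA : 0 ≤ L * (ω - 1) - 2 * β * (ω / k - 1 / k + 1)) (hω : 0 ≤ ω) :
    Monotone (uMax L β ω k) :=
  (monotone_lMax hA hω).add_const _

theorem le_uMax (hA : 0 ≤ L * (ω - 1) - 2 * β * (ω / k - 1 / k + 1)) (hω : 0 ≤ ω) (hβ : 0 ≤ β)
    (i : ℕ) : L ≤ uMax L β ω k i := by
  rw [uMax, lMax_eq_add]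
  have : 0 ≤ (L * (ω - 1) - 2 * β * (ω / k - 1 / k + 1)) * (1 + ω / k) ^ (i - 1) := by
    positivity
  linarith

theorem uMax_succ_self
    (heq : U - L - 2 * β
      = (L * (ω - 1) - 2 * β * (1 - 1 / (k : ℝ) + ω / (k : ℝ))) * (1 + ω / (k : ℝ)) ^ k) :
    uMax L β ω k (k + 1) = U := by
  rw [uMax, lMax_eq_add, Nat.add_sub_cancel]
  linear_combination -heq

theorem mul_uMax_sub_eq (hk : k ≠ 0) {i : ℕ} (hi : 1 ≤ i) :
    k * uMax L β ω k i - 2 * β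
      = ω * ((∑ j ∈ Ico 1 i, lMax L β ω k j) + ((k : ℝ) + 1 - i) * L - 2 * β) := by
  have hk' : (k : ℝ) ≠ 0 := by exact_mod_cast hk
  induction i, hi using Nat.le_induction with
  | base =>
    simp only [uMax, lMax_eq_add, Ico_self, sum_empty]
    field_simp
    ring
  | succ i hi ih =>
    rw [sum_Ico_succ_top hi]
    have hstep : (k : ℝ) * uMax L β ω k (i + 1) - k * uMax L β ω k i
        = ω * (lMax L β ω k i - L) := by
      simp only [uMax, lMax_eq_add, Nat.add_sub_cancel]
      obtain ⟨n, rfl⟩ : ∃ n, i = n + 1 := ⟨i - 1, by omega⟩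
      rw [Nat.add_sub_cancel, pow_succ]
      field_simp
      ring
    push_cast
    linarith

end Thresholds

/-- From time `t` on the deadline binds: the `k + 1 - i_t` missing units fill all `T - t`
remaining slots. -/
def IsTight (k T : ℕ) (ℓ u c : ℕ → ℝ) (t : ℕ) : Prop :=
  (dtprMaxState k T ℓ u c t).2 + T = t + k + 1

section DTPRMax

variable {k T : ℕ} {ℓ u c : ℕ → ℝ} {t : ℕ} {β θ : ℝ}

local notation "st" => dtprMaxState k T ℓ u c
local notation "alg" => dtprMaxX k T ℓ u c

theorem dtprMaxState_zero : st 0 = (0, 1) := rfl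

theorem dtprMaxState_succ_of_lt (h : k < (st t).2) : st (t + 1) = (0, (st t).2) := by
  simp [dtprMaxState, h]

theorem dtprMaxState_succ_of_forced (h : (st t).2 ≤ k)
    (hf : (T : ℤ) - ((t : ℤ) + 1) ≤ (k : ℤ) - ((st t).2 : ℤ)) :
    st (t + 1) = (1, (st t).2 + 1) := by
  simp [dtprMaxState, not_lt.2 h, hf]

theorem dtprMaxState_succ_of_not_forced (h : (st t).2 ≤ k)
    (hf : ¬ (T : ℤ) - ((t : ℤ) + 1) ≤ (k : ℤ) - ((st t).2 : ℤ)) :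
    st (t + 1) =
      if (st t).1 = 0 then
        if u (st t).2 ≤ c (t + 1) then (1, (st t).2 + 1) else (0, (st t).2)
      else
        if ℓ (st t).2 ≤ c (t + 1) then (1, (st t).2 + 1) else (0, (st t).2) := by
  simp only [dtprMaxState, not_lt.2 h, hf, if_false]

theorem dtprMaxState_succ_eq_or :
    st (t + 1) = (0, (st t).2) ∨ st (t + 1) = (1, (st t).2 + 1) := by
  simp only [dtprMaxState]
  split_ifs <;> simp

theorem dtprMaxState_fst_le_one : ∀ t, (st t).1 ≤ 1
  | 0 => by simp [dtprMaxState_zero]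
  | t + 1 => by
    rcases (dtprMaxState_succ_eq_or : st (t + 1) = _ ∨ _) with h | h <;> simp [h]

theorem dtprMaxState_snd_succ : (st (t + 1)).2 = (st t).2 + (st (t + 1)).1 := by
  rcases (dtprMaxState_succ_eq_or : st (t + 1) = _ ∨ _) with h | h <;> simp [h]

theorem dtprMaxState_snd_eq (t : ℕ) : (st t).2 = 1 + ∑ j ∈ Icc 1 t, (st j).1 := by
  induction t with
  | zero => simp [dtprMaxState_zero]
  | succ t ih => rw [sum_Icc_succ_top (by omega), dtprMaxState_snd_succ, ih, add_assoc]

theorem dtprMaxState_snd_le (t : ℕ) : (st t).2 ≤ k + 1 := by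
  induction t with
  | zero => simp [dtprMaxState_zero]
  | succ t ih =>
    by_cases h : k < (st t).2
    · rw [dtprMaxState_succ_of_lt h]; exact ih
    rcases (dtprMaxState_succ_eq_or : st (t + 1) = _ ∨ _) with h' | h' <;> simp only [h'] <;> omega

theorem dtprMaxState_slack (hT : k ≤ T) : ∀ t ≤ T, k + 1 ≤ (st t).2 + (T - t)
  | 0, _ => by simp only [dtprMaxState_zero]; omega
  | t + 1, ht => by
    have ih := dtprMaxState_slack hT t (by omega)
    by_cases h : k < (st t).2
    · simp only [dtprMaxState_succ_of_lt h]; omega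
    by_cases hf : (T : ℤ) - ((t : ℤ) + 1) ≤ (k : ℤ) - ((st t).2 : ℤ)
    · simp only [dtprMaxState_succ_of_forced (not_lt.1 h) hf]; omega
    · rw [dtprMaxState_snd_succ]; omega

theorem dtprMaxState_snd_self (hT : k ≤ T) : (st T).2 = k + 1 := by
  have h₁ : k + 1 ≤ (st T).2 + (T - T) := dtprMaxState_slack hT T le_rfl
  have h₂ : (st T).2 ≤ k + 1 := dtprMaxState_snd_le T
  omega

theorem feasible_dtprMaxX (hT : k ≤ T) : Feasible T k (dtprMaxX k T ℓ u c) := by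
  have hTk : (st T).2 = k + 1 := dtprMaxState_snd_self hT
  refine ⟨dtprMaxState_fst_le_one, rfl, ?_, ?_⟩
  · simp [dtprMaxX, dtprMaxState_succ_of_lt (show k < (st T).2 by omega)]
  · have := (dtprMaxState_snd_eq T : (st T).2 = _)
    simp only [dtprMaxX]; omega

theorem one_le_dtprMaxState_snd (t : ℕ) : 1 ≤ (st t).2 := by
  rw [dtprMaxState_snd_eq]; omega

theorem dtprMaxState_snd_le_succ (t : ℕ) : (st t).2 ≤ (st (t + 1)).2 := by
  rw [dtprMaxState_snd_succ]; omega

theorem isTight_self (hT : k ≤ T) : IsTight k T ℓ u c T := by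
  rw [IsTight, dtprMaxState_snd_self hT]; ring

theorem not_forced_of_not_isTight (hT : k ≤ T) (ht : t ≤ T) (h : ¬ IsTight k T ℓ u c t) :
    ¬ (T : ℤ) - ((t : ℤ) + 1) ≤ (k : ℤ) - ((st t).2 : ℤ) := by
  have : k + 1 ≤ (st t).2 + (T - t) := dtprMaxState_slack hT t ht
  unfold IsTight at h
  omega

theorem IsTight.dtprMaxState_succ (h : IsTight k T ℓ u c t) (ht : t < T) :
    st (t + 1) = (1, (st t).2 + 1) := by
  unfold IsTight at h
  exact dtprMaxState_succ_of_forced (by omega) (by omega)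

theorem IsTight.succ (h : IsTight k T ℓ u c t) (ht : t < T) : IsTight k T ℓ u c (t + 1) := by
  have hnext := h.dtprMaxState_succ ht
  unfold IsTight at h ⊢
  rw [hnext]
  omega

theorem IsTight.mono {s : ℕ} (h : IsTight k T ℓ u c s) (hst : s ≤ t) (ht : t ≤ T) :
    IsTight k T ℓ u c t := by
  induction t, hst using Nat.le_induction with
  | base => exact h
  | succ t _ ih => exact (ih (by omega)).succ (by omega)

theorem profitUpTo_succ_ge_of_not_isTight (hT : k ≤ T) (hlu : ∀ j, ℓ j + 2 * β ≤ u j)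
    (hβ : 0 ≤ β) (hu : Monotone u) (hcU : ∀ t ∈ Icc 1 T, c t ≤ u (k + 1)) (ht : t < T)
    (hnt : ¬ IsTight k T ℓ u c t) (hθ : u (st (t + 1)).2 ≤ θ) :
    (∑ j ∈ Ico 1 (st (t + 1)).2, ℓ j) + max (c (t + 1) - θ) 0
      ≤ (∑ j ∈ Ico 1 (st t).2, ℓ j) + (profitUpTo β c alg (t + 1) - profitUpTo β c alg t) := by
  rw [profitUpTo_succ (dtprMaxState_fst_le_one t) (dtprMaxState_fst_le_one (t + 1))]
  simp only [dtprMaxX]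
  have hcθ_of_le : c (t + 1) ≤ θ → max (c (t + 1) - θ) 0 = 0 := fun h => max_eq_right (by linarith)
  by_cases hdone : k < (st t).2
  · have hi : (st t).2 = k + 1 := by
      have : (st t).2 ≤ k + 1 := dtprMaxState_snd_le t
      omega
    rw [dtprMaxState_succ_of_lt hdone] at hθ ⊢
    rw [hi] at hθ
    simp [hcθ_of_le ((hcU _ (mem_Icc.2 ⟨by omega, by omega⟩)).trans hθ)]
  have hθ' : u (st t).2 ≤ θ := (hu (dtprMaxState_snd_le_succ t)).trans hθ
  have hi1 : 1 ≤ (st t).2 := one_le_dtprMaxState_snd t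
  have hx : (st t).1 ≤ 1 := dtprMaxState_fst_le_one t
  have hlu' := hlu (st t).2
  rw [dtprMaxState_succ_of_not_forced (not_lt.1 hdone) (not_forced_of_not_isTight hT ht.le hnt)]
    at hθ ⊢
  split_ifs at hθ ⊢ with hx0 hc hc
  · rw [sum_Ico_succ_top hi1, hx0]
    push_cast
    have := max_le (a := c (t + 1) - θ) (b := 0) (c := c (t + 1) - u (st t).2) (by linarith)
      (by linarith)
    linarith
  · simp [hcθ_of_le (by linarith)]
  · rw [sum_Ico_succ_top hi1, show (st t).1 = 1 by omega]
    push_cast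
    have := max_le (a := c (t + 1) - θ) (b := 0) (c := c (t + 1) - ℓ (st t).2) (by linarith)
      (by linarith)
    linarith
  · simp [hcθ_of_le (by linarith)]

theorem le_profitUpTo_of_forall_not_isTight (hT : k ≤ T) (hlu : ∀ j, ℓ j + 2 * β ≤ u j)
    (hβ : 0 ≤ β) (hu : Monotone u) (hcU : ∀ t ∈ Icc 1 T, c t ≤ u (k + 1)) :
    ∀ t ≤ T, (∀ s < t, ¬ IsTight k T ℓ u c s) → u (st t).2 ≤ θ →
      (∑ j ∈ Ico 1 (st t).2, ℓ j) + ∑ j ∈ Icc 1 t, max (c j - θ) 0 ≤ profitUpTo β c alg t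
  | 0, _, _, _ => by simp [dtprMaxState_zero, profitUpTo_zero (show alg 0 = 0 from rfl)]
  | t + 1, ht, hnt, hθ => by
    have ih := le_profitUpTo_of_forall_not_isTight hT hlu hβ hu hcU t (by omega)
      (fun s hs => hnt s (by omega)) ((hu (dtprMaxState_snd_le_succ t)).trans hθ)
    have hstep := profitUpTo_succ_ge_of_not_isTight hT hlu hβ hu hcU ht (hnt t (by omega)) hθ
    rw [sum_Icc_succ_top (by omega)]
    linarith

theorem profitUpTo_add_sum_le_of_isTight (hβ : 0 ≤ β) {τ : ℕ} (hτ : IsTight k T ℓ u c τ) :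
    ∀ s, τ ≤ s → s ≤ T →
      profitUpTo β c alg τ + ∑ j ∈ Ioc τ s, c j - 2 * β ≤ profitUpTo β c alg s := by
  intro s hτs
  induction s, hτs using Nat.le_induction with
  | base => intro _; simp only [Ioc_self, sum_empty, add_zero]; linarith
  | succ s hτs ih =>
    intro hs
    have hnext : (st (s + 1)).1 = 1 := by
      rw [(hτ.mono hτs (by omega)).dtprMaxState_succ (by omega)]
    rw [profitUpTo_succ (dtprMaxState_fst_le_one s) (dtprMaxState_fst_le_one (s + 1)),
      sum_Ioc_succ_top hτs]
    simp only [dtprMaxX, hnext, Nat.cast_one, one_mul]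
    rcases hτs.eq_or_lt with rfl | hlt
    · have hx : ((st s).1 : ℝ) ≤ 1 := by exact_mod_cast dtprMaxState_fst_le_one s
      have hx0 : (0 : ℝ) ≤ (st s).1 := by positivity
      simp only [Ioc_self, sum_empty]
      nlinarith
    · obtain ⟨r, rfl⟩ : ∃ r, s = r + 1 := ⟨s - 1, by omega⟩
      have hcur : (st (r + 1)).1 = 1 := by
        rw [(hτ.mono (by omega) (by omega)).dtprMaxState_succ (by omega)]
      have := ih (by omega)
      rw [hcur]
      push_cast
      linarith

theorem exists_le_profit_dtprMaxX {L : ℝ} (hT : k ≤ T) (hlu : ∀ j, ℓ j + 2 * β ≤ u j)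
    (hβ : 0 ≤ β) (hu : Monotone u) (hLu : ∀ j, L ≤ u j)
    (hc : ∀ t ∈ Icc 1 T, c t ∈ Set.Icc L (u (k + 1))) :
    ∃ i, 1 ≤ i ∧ (∑ j ∈ Ico 1 i, ℓ j) + ((k : ℝ) + 1 - i) * L - 2 * β
        + ∑ t ∈ Icc 1 T, max (c t - u i) 0 ≤ profit β T c (dtprMaxX k T ℓ u c) := by
  classical
  have hex : ∃ t, IsTight k T ℓ u c t := ⟨T, isTight_self hT⟩
  set τ := Nat.find hex
  have hτ : IsTight k T ℓ u c τ := Nat.find_spec hex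
  have hτT : τ ≤ T := Nat.find_min' hex (isTight_self hT)
  refine ⟨(st τ).2, one_le_dtprMaxState_snd τ, ?_⟩
  set θ := u (st τ).2
  have hbefore := le_profitUpTo_of_forall_not_isTight (θ := θ) hT hlu hβ hu
    (fun t ht => (hc t ht).2) τ hτT (fun s hs => Nat.find_min hex hs) le_rfl
  have hafter := profitUpTo_add_sum_le_of_isTight hβ hτ T hτT le_rfl
  have hprices : ∑ j ∈ Ioc τ T, (L + max (c j - θ) 0) ≤ ∑ j ∈ Ioc τ T, c j := by
    refine sum_le_sum fun j hj => ?_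
    have hcj := hc j (by simp at hj ⊢; omega)
    have := max_le (a := c j - θ) (b := 0) (c := c j - L) (by linarith [hLu (st τ).2])
      (by linarith [hcj.1])
    linarith
  have hremaining : ((T - τ : ℕ) : ℝ) = k + 1 - (st τ).2 := by
    unfold IsTight at hτ
    rw [Nat.cast_sub hτT]
    linarith [(by exact_mod_cast hτ : ((st τ).2 : ℝ) + T = τ + k + 1)]
  rw [sum_add_distrib, sum_const, Nat.card_Ioc, nsmul_eq_mul, hremaining] at hprices
  have hsplit : ∑ t ∈ Icc 1 T, max (c t - θ) 0
      = ∑ t ∈ Icc 1 τ, max (c t - θ) 0 + ∑ t ∈ Ioc τ T, max (c t - θ) 0 := by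
    have hIcc : ∀ n, Icc 1 n = Ioc 0 n := fun n => by ext; simp; omega
    rw [hIcc, hIcc, sum_Ioc_consecutive _ (Nat.zero_le τ) hτT]
  rw [profit_eq_profitUpTo (feasible_dtprMaxX hT).2.2.1, hsplit]
  linarith

end DTPRMax

theorem dtpr_max_competitive_general
    (L U : ℝ) (hL : 0 < L)
    (k T : ℕ) (hk : 1 ≤ k) (hT : k ≤ T)
    (β : ℝ) (hβ : 0 < 2 * β) (hβUL : 2 * β < U - L)
    (ω : ℝ) (hω : 0 < ω)
    (heq : U - L - 2 * β
      = (L * (ω - 1) - 2 * β * (1 - 1 / (k : ℝ) + ω / (k : ℝ)))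
          * (1 + ω / (k : ℝ)) ^ k)
    (c : ℕ → ℝ) (hc : ∀ t ∈ Finset.Icc 1 T, c t ∈ Set.Icc L U) :
    Feasible T k (dtprMaxX k T (lMax L β ω k) (uMax L β ω k) c) ∧
      OPTmax β T k c
        ≤ ω * profit β T c (dtprMaxX k T (lMax L β ω k) (uMax L β ω k) c) := by
  have hβ' : 0 ≤ β := by linarith
  have hA := threshold_scale_pos hβUL hω heq
  have hω1 := one_lt_of_threshold_scale_pos hL.le hβ' hω.le hk hA
  have hfeas := feasible_dtprMaxX (ℓ := lMax L β ω k) (u := uMax L β ω k) (c := c) hT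
  obtain ⟨i, hi, hALG⟩ := exists_le_profit_dtprMaxX (u := uMax L β ω k) (c := c) hT
    (fun _ => le_rfl) hβ' (monotone_uMax hA.le hω.le) (le_uMax hA.le hω.le hβ')
    (by rwa [uMax_succ_self heq])
  refine ⟨hfeas, csSup_le ⟨_, _, hfeas, rfl⟩ ?_⟩
  rintro _ ⟨y, hy, rfl⟩
  have hOPT := profit_le_of_feasible (c := c) hβ' hk hy (uMax L β ω k i)
  rw [mul_uMax_sub_eq (by omega) hi] at hOPT
  have hexcess : 0 ≤ ∑ t ∈ Icc 1 T, max (c t - uMax L β ω k i) 0 :=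
    sum_nonneg fun _ _ => le_max_right _ _
  linarith [mul_le_mul_of_nonneg_left hALG hω.le, mul_nonneg (sub_nonneg.2 hω1.le) hexcess]

/-- **Theorem 4.2 (DTPR-max is ω-competitive).** -/
theorem dtpr_max_competitive
    (L U : ℝ) (hL : 0 < L) (hLU : L < U)
    (k T : ℕ) (hk : 1 ≤ k) (hT : k ≤ T)
    (β : ℝ) (hβ : 0 < 2 * β) (hβUL : 2 * β < U - L) (hβkL : 2 * β < (k : ℝ) * L)
    (ω : ℝ) (hω : 0 < ω)
    (heq : U - L - 2 * β
      = (L * (ω - 1) - 2 * β * (1 - 1 / (k : ℝ) + ω / (k : ℝ)))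
          * (1 + ω / (k : ℝ)) ^ k)
    (c : ℕ → ℝ) (hc : ∀ t ∈ Finset.Icc 1 T, c t ∈ Set.Icc L U) :
    Feasible T k (dtprMaxX k T (lMax L β ω k) (uMax L β ω k) c) ∧
      OPTmax β T k c
        ≤ ω * profit β T c (dtprMaxX k T (lMax L β ω k) (uMax L β ω k) c) :=
  dtpr_max_competitive_general L U hL k T hk hT β hβ hβUL ω hω heq c hc
end

section
/- With ω a positive solution of Equation (4) and the thresholds ℓ_i, u_i defined from ω, for every integer j with 0 ≤ j ≤ k it holds that ω·(Σ_{i=1}^j ℓ_i + (k − j)·L − 2β) ≤ k·u_{j+1} − 2β. -/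
open Finset

lemma lMax_sum (L β ω : ℝ) (k : ℕ) (hk : 1 ≤ k) (hω : ω ≠ 0) (j : ℕ) :
    ∑ i ∈ Finset.Icc 1 j, lMax L β ω k i
      = (j : ℝ) * L + (L * (ω - 1) - 2 * β * (ω / (k : ℝ) - 1 / (k : ℝ) + 1))
          * ((1 + ω / (k : ℝ)) ^ j - 1) * ((k : ℝ) / ω) := by
  have hkR : (k : ℝ) ≠ 0 := by positivity
  induction j with
  | zero => simp
  | succ n ih =>
      rw [Finset.sum_Icc_succ_top (by omega : 1 ≤ n + 1), ih, lMax]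
      have : n + 1 - 1 = n := rfl
      rw [this]
      push_cast
      rw [pow_succ]
      generalize (1 + ω / (k : ℝ)) ^ n = p
      field_simp
      ring

/-- **Lemma B.1.** For any `0 ≤ j ≤ k`,
`ω·(Σ_{i=1}^j ℓ_i + (k − j)·L − 2β) ≤ k·u_{j+1} − 2β`. -/
theorem dtpr_max_intermediate
    (L U : ℝ) (hL : 0 < L) (hLU : L < U)
    (k : ℕ) (hk : 1 ≤ k)
    (β : ℝ) (hβ : 0 < 2 * β) (hβUL : 2 * β < U - L) (hβkL : 2 * β < (k : ℝ) * L)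
    (ω : ℝ) (hω : 0 < ω)
    (heq : U - L - 2 * β
      = (L * (ω - 1) - 2 * β * (1 - 1 / (k : ℝ) + ω / (k : ℝ)))
          * (1 + ω / (k : ℝ)) ^ k)
    (j : ℕ) (hj : j ≤ k) :
    ω * ((∑ i ∈ Finset.Icc 1 j, lMax L β ω k i) + ((k : ℝ) - (j : ℝ)) * L - 2 * β)
      ≤ (k : ℝ) * uMax L β ω k (j + 1) - 2 * β := by
  have hkR : (k : ℝ) ≠ 0 := by positivity
  have hωne : ω ≠ 0 := ne_of_gt hω
  rw [lMax_sum L β ω k hk hωne, uMax, lMax]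
  have : j + 1 - 1 = j := rfl
  rw [this]
  apply le_of_eq
  field_simp
  ring
end

section
/- There exists exactly one positive real α satisfying Equation (3), i.e., exactly one α > 0 with U − L − 2β = (U·(1 − 1/α) − 2β·(1 − 1/k + 1/(kα)))·(1 + 1/(kα))^k. -/
/-- **Existence and uniqueness of the solution of Equation (3).** -/
theorem eq_alpha_exists_unique
    (L U : ℝ) (hL : 0 < L) (hLU : L < U)
    (k : ℕ) (hk : 1 ≤ k)
    (β : ℝ) (hβ : 0 < 2 * β) (hβUL : 2 * β < U - L) :
    ∃! α : ℝ, 0 < α ∧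
      U - L - 2 * β
        = (U * (1 - 1 / α) - 2 * β * (1 - 1 / (k : ℝ) + 1 / ((k : ℝ) * α)))
            * (1 + 1 / ((k : ℝ) * α)) ^ k := by
  have hβ' : 0 < β := by linarith
  have hU : 0 < U := hL.trans hLU
  have hk0 : (0:ℝ) < (k : ℝ) := by exact_mod_cast Nat.pos_of_ne_zero (by omega)
  set k' : ℝ := (k : ℝ) with hk'
  have hk'ne : k' ≠ 0 := ne_of_gt hk0
  obtain ⟨A, hA⟩ : ∃ A : ℝ, A = U - 2*β*(1 - 1/k') := ⟨_, rfl⟩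
  obtain ⟨B, hB⟩ : ∃ B : ℝ, B = U*k' + 2*β := ⟨_, rfl⟩
  obtain ⟨C, hC⟩ : ∃ C : ℝ, C = U - L - 2*β := ⟨_, rfl⟩
  have hC0 : 0 < C := by rw [hC]; linarith
  have hB0 : 0 < B := by
    have : 0 < U * k' := mul_pos hU hk0
    rw [hB]; linarith
  obtain ⟨g, hg⟩ : ∃ g : ℝ → ℝ, g = fun x => (A - B*x)*(1+x)^k := ⟨_, rfl⟩
  -- derivative
  have hderiv : ∀ x : ℝ, HasDerivAt g (-B*(1+x)^k + (A - B*x)*(k'*(1+x)^(k-1)*1)) x := by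
    intro x
    rw [hg]
    have h1 : HasDerivAt (fun x : ℝ => A - B*x) (-B) x := by
      simpa using ((hasDerivAt_id x).const_mul B).const_sub A
    have h2 : HasDerivAt (fun x : ℝ => (1+x)^k) (k'*(1+x)^(k-1)*1) x := by
      exact_mod_cast ((hasDerivAt_id x).const_add 1).pow k
    exact h1.mul h2
  have hgc : Continuous g := by rw [hg]; fun_prop
  have hkey : k'*A - B = -(2*β*k') := by
    rw [hA, hB]; field_simp; ring
  have hanti : StrictAntiOn g (Set.Ici 0) := by
    apply strictAntiOn_of_deriv_neg (convex_Ici 0) hgc.continuousOn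
    intro x hx
    rw [interior_Ici] at hx
    have hx0 : (0:ℝ) < x := hx
    rw [(hderiv x).deriv]
    have h1x : (0:ℝ) < 1 + x := by linarith
    have hp : 0 < (1+x)^(k-1) := pow_pos h1x _
    have hfact : (1+x)^k = (1+x)^(k-1) * (1+x) := by
      rw [← pow_succ]; congr 1; omega
    have hrw : -B*(1+x)^k + (A - B*x)*(k'*(1+x)^(k-1)*1)
        = (1+x)^(k-1) * ((k'*A - B) - (k'+1)*(B*x)) := by
      rw [hfact]; ring
    rw [hrw, hkey]
    apply mul_neg_of_pos_of_neg hp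
    have h1 : 0 < B * x := mul_pos hB0 hx0
    have h2 : 0 < 2*β*k' := by positivity
    nlinarith
  -- values at endpoints
  have hg0 : g 0 = A := by rw [hg]; simp
  have hCA : C < A := by
    have h2 : 0 < 2*β/k' := by positivity
    have : A - C = L + 2*β/k' := by rw [hA, hC]; ring
    linarith
  set x0 : ℝ := |A|/B + 1 with hx0def
  have hx0 : 0 < x0 := by positivity
  have hgx0 : g x0 < C := by
    have hBx0 : B * x0 = |A| + B := by
      rw [hx0def]; field_simp
    have hneg : A - B*x0 < 0 := by
      have := le_abs_self A
      rw [hBx0]; linarith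
    have : g x0 < 0 := by
      rw [hg]
      exact mul_neg_of_neg_of_pos hneg (pow_pos (by linarith) k)
    linarith
  obtain ⟨x, hxmem, hgx⟩ := intermediate_value_Icc' hx0.le hgc.continuousOn
    (by rw [hg0]; exact ⟨hgx0.le, hCA.le⟩)
  have hxpos : 0 < x := by
    rcases eq_or_lt_of_le hxmem.1 with h | h
    · exfalso; rw [← h] at hgx; rw [hg0] at hgx; exact absurd hgx.symm (ne_of_lt hCA)
    · exact h
  -- key equivalence
  have key : ∀ α : ℝ, 0 < α →
      ((U - L - 2*β = (U*(1 - 1/α) - 2*β*(1 - 1/k' + 1/(k'*α))) * (1 + 1/(k'*α))^k)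
        ↔ g (1/(k'*α)) = C) := by
    intro α hα
    have hαne : α ≠ 0 := ne_of_gt hα
    have heq : (U*(1 - 1/α) - 2*β*(1 - 1/k' + 1/(k'*α))) = A - B*(1/(k'*α)) := by
      rw [hA, hB]; field_simp; ring
    rw [heq, hg, hC]
    exact eq_comm
  refine ⟨1/(k'*x), ⟨by positivity, ?_⟩, ?_⟩
  · rw [key (1/(k'*x)) (by positivity)]
    have hsimp : 1/(k'*(1/(k'*x))) = x := by
      field_simp
    rw [hsimp]; exact hgx
  · rintro α' ⟨hα', heq⟩
    have hgα' : g (1/(k'*α')) = C := (key α' hα').mp heq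
    have hmem1 : (1/(k'*α')) ∈ Set.Ici (0:ℝ) := le_of_lt (show (0:ℝ) < 1/(k'*α') by positivity)
    have hmem2 : x ∈ Set.Ici (0:ℝ) := hxmem.1
    have hxx : 1/(k'*α') = x := hanti.injOn hmem1 hmem2 (hgα'.trans hgx.symm)
    have hα'ne : α' ≠ 0 := ne_of_gt hα'
    have hxne : x ≠ 0 := ne_of_gt hxpos
    field_simp at hxx ⊢
    nlinarith [hxx]
end

section
/- There exists exactly one positive real ω satisfying Equation (4), i.e., exactly one ω > 0 with U − L − 2β = (L·(ω − 1) − 2β·(1 − 1/k + ω/k))·(1 + ω/k)^k. -/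
/-!
Write the right-hand side of Equation (4) as `g ω * p ω` with
`g ω = (L - 2β/k) ω - (L + 2β - 2β/k)` affine and `p ω = (1 + ω/k)^k`.
The hypothesis `2β < kL` makes the slope of `g` positive, so `g * p` is continuous, negative at
`ω = 0` and tends to `+∞`: the intermediate value theorem gives a positive solution.
At any solution `g ω > 0` (as `p > 0` and `U - L - 2β > 0`), and there `g` is strictly increasing
while `p` is positive and increasing, so two solutions cannot differ.
-/

open Filter Set

theorem eq_of_mul_eq_of_strictMonoOn {α M : Type*} [LinearOrder α] [Ring M] [LinearOrder M]
    [IsStrictOrderedRing M] {s : Set α} {g p : α → M} {c : M} (hc : 0 < c)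
    (hg : StrictMonoOn g s) (hp : MonotoneOn p s) (hp₀ : ∀ x ∈ s, 0 < p x)
    {a b : α} (ha : a ∈ s) (hb : b ∈ s) (hga : g a * p a = c) (hgb : g b * p b = c) :
    a = b := by
  have key : ∀ x ∈ s, ∀ y ∈ s, g x * p x = c → x < y → g x * p x < g y * p y := by
    intro x hx y hy hgx hxy
    have hgx₀ : 0 < g x := pos_of_mul_pos_left (hgx ▸ hc) (hp₀ x hx).le
    have hgxy := hg hx hy hxy
    exact mul_lt_mul hgxy (hp hx hy hxy.le) (hp₀ x hx) (hgx₀.trans hgxy).le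
  rcases lt_trichotomy a b with hab | hab | hab
  · exact absurd (hga.trans hgb.symm) (key a ha b hb hga hab).ne
  · exact hab
  · exact absurd (hgb.trans hga.symm) (key b hb a ha hgb hab).ne

section Equation4

variable {L β : ℝ} {k : ℕ}

lemma affine_factor_eq (ω : ℝ) :
    L * (ω - 1) - 2 * β * (1 - 1 / (k : ℝ) + ω / (k : ℝ))
      = (L - 2 * β / k) * ω - (L + 2 * β - 2 * β / k) := by
  ring

lemma strictMono_affine_factor (hs : 0 < L - 2 * β / k) :
    StrictMono fun ω : ℝ => L * (ω - 1) - 2 * β * (1 - 1 / (k : ℝ) + ω / (k : ℝ)) := by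
  simp only [affine_factor_eq]
  exact fun a b hab => sub_lt_sub_right (mul_lt_mul_of_pos_left hab hs) _

lemma tendsto_affine_factor_atTop (hs : 0 < L - 2 * β / k) :
    Tendsto (fun ω : ℝ => L * (ω - 1) - 2 * β * (1 - 1 / (k : ℝ) + ω / (k : ℝ))) atTop atTop := by
  simp only [affine_factor_eq]
  exact tendsto_atTop_add_const_right _ _ (tendsto_id.const_mul_atTop hs)

lemma monotoneOn_one_add_div_pow : MonotoneOn (fun ω : ℝ => (1 + ω / k) ^ k) (Ici 0) :=
  fun a ha b _ hab => pow_le_pow_left₀ (add_nonneg zero_le_one (div_nonneg ha k.cast_nonneg)) (by gcongr) k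

lemma one_add_div_pow_pos {ω : ℝ} (hω : 0 ≤ ω) : 0 < (1 + ω / k) ^ k := by
  positivity

lemma tendsto_one_add_div_pow_atTop (hk : k ≠ 0) :
    Tendsto (fun ω : ℝ => (1 + ω / k) ^ k) atTop atTop :=
  (tendsto_pow_atTop hk).comp <|
    tendsto_atTop_add_const_left _ _ (tendsto_id.atTop_div_const (by positivity))

end Equation4

theorem eq_omega_exists_unique_general
    (L U : ℝ)
    (k : ℕ) (hk : 1 ≤ k)
    (β : ℝ) (hβ : 0 < 2 * β) (hβUL : 2 * β < U - L) (hβkL : 2 * β < (k : ℝ) * L) :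
    ∃! ω : ℝ, 0 < ω ∧
      U - L - 2 * β
        = (L * (ω - 1) - 2 * β * (1 - 1 / (k : ℝ) + ω / (k : ℝ)))
            * (1 + ω / (k : ℝ)) ^ k := by
  have hk₀ : (0 : ℝ) < k := by exact_mod_cast hk
  have hs : 0 < L - 2 * β / k := by rw [sub_pos, div_lt_iff₀ hk₀]; linarith
  have hf₀ : (L * (0 - 1) - 2 * β * (1 - 1 / (k : ℝ) + 0 / (k : ℝ))) * (1 + 0 / (k : ℝ)) ^ k
      < U - L - 2 * β := by
    rw [affine_factor_eq]; simp only [zero_div, add_zero, one_pow, mul_one, mul_zero]; linarith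
  obtain ⟨ω, hω : 0 < ω, hωeq⟩ := intermediate_value_Ioi (by fun_prop)
    ((tendsto_affine_factor_atTop hs).atTop_mul_atTop₀
      (tendsto_one_add_div_pow_atTop (by omega))) hf₀
  refine ⟨ω, ⟨hω, hωeq.symm⟩, fun y ⟨hy, hyeq⟩ => ?_⟩
  exact eq_of_mul_eq_of_strictMonoOn (sub_pos.2 hβUL)
    ((strictMono_affine_factor hs).strictMonoOn _) monotoneOn_one_add_div_pow (fun _ => one_add_div_pow_pos) hy.le hω.le hyeq.symm hωeq

/-- **Existence and uniqueness of the solution of Equation (4).** -/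
theorem eq_omega_exists_unique
    (L U : ℝ) (hL : 0 < L) (hLU : L < U)
    (k : ℕ) (hk : 1 ≤ k)
    (β : ℝ) (hβ : 0 < 2 * β) (hβUL : 2 * β < U - L) (hβkL : 2 * β < (k : ℝ) * L) :
    ∃! ω : ℝ, 0 < ω ∧
      U - L - 2 * β
        = (L * (ω - 1) - 2 * β * (1 - 1 / (k : ℝ) + ω / (k : ℝ)))
            * (1 + ω / (k : ℝ)) ^ k :=
  eq_omega_exists_unique_general L U k hk β hβ hβUL hβkL
end

section
/- The maximization thresholds satisfy the exact balancing identity: for every real ω > 0 and every integer j with 0 ≤ j ≤ k, ω·(Σ_{i=1}^j ℓ_i + (k − j)·L − 2β) = k·(ℓ_{j+1} + 2β) − 2β. -/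
open Finset

/-! With `r = 1 + ω/k`, each threshold is `ℓ_i = L + a r^{i-1}` for a constant `a`, so
`ω Σ_{i ≤ j} ℓ_i = ω j L + k a (r^j - 1)` by the geometric sum (`r - 1 = ω/k`). Substituting,
both sides of the balancing identity are `k a r^j` plus the same constant. -/

theorem geom_sum_Icc_one_mul {R : Type*} [CommRing R] (x : R) (j : ℕ) :
    (∑ i ∈ Icc 1 j, x ^ (i - 1)) * (x - 1) = x ^ j - 1 := by
  rw [← Ico_add_one_right_eq_Icc, sum_Ico_eq_sum_range]
  simpa using geom_sum_mul x j

theorem mul_sum_Icc_add_mul_geom (L a ω κ : ℝ) (hκ : κ ≠ 0) (j : ℕ) :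
    ω * ∑ i ∈ Icc 1 j, (L + a * (1 + ω / κ) ^ (i - 1))
      = ω * j * L + κ * a * ((1 + ω / κ) ^ j - 1) := by
  have hgeom := geom_sum_Icc_one_mul (1 + ω / κ) j
  rw [add_sub_cancel_left] at hgeom
  rw [sum_add_distrib, sum_const, Nat.card_Icc, Nat.add_sub_cancel, nsmul_eq_mul, ← mul_sum,
    ← hgeom]
  field_simp

theorem lMax_eq_add_mul_pow (L β ω : ℝ) (k : ℕ) (i : ℕ) :
    lMax L β ω k i
      = L + (L * (ω - 1) - 2 * β * (ω / k - 1 / k + 1)) * (1 + ω / k) ^ (i - 1) := by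
  unfold lMax
  ring

theorem dtpr_max_balancing_identity_general
    (L β : ℝ) (k : ℕ) (hk : 1 ≤ k)
    (ω : ℝ)
    (j : ℕ) :
    ω * ((∑ i ∈ Finset.Icc 1 j, lMax L β ω k i) + ((k : ℝ) - (j : ℝ)) * L - 2 * β)
      = (k : ℝ) * (lMax L β ω k (j + 1) + 2 * β) - 2 * β := by
  have hk0 : (k : ℝ) ≠ 0 := by positivity
  simp only [lMax_eq_add_mul_pow, Nat.add_sub_cancel]
  rw [mul_sub, mul_add, mul_sum_Icc_add_mul_geom _ _ _ _ hk0]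
  field_simp
  ring

/-- The exact balancing identity for the maximization thresholds: for every
`ω > 0` and every `0 ≤ j ≤ k`,
`ω·(Σ_{i=1}^j ℓ_i + (k − j)·L − 2β) = k·(ℓ_{j+1} + 2β) − 2β`. -/
theorem dtpr_max_balancing_identity
    (L β : ℝ) (k : ℕ) (hk : 1 ≤ k)
    (ω : ℝ) (hω : 0 < ω)
    (j : ℕ) (hj : j ≤ k) :
    ω * ((∑ i ∈ Finset.Icc 1 j, lMax L β ω k i) + ((k : ℝ) - (j : ℝ)) * L - 2 * β)
      = (k : ℝ) * (lMax L β ω k (j + 1) + 2 * β) - 2 * β :=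
  dtpr_max_balancing_identity_general L β k hk ω j
end

section
/- As k → ∞ with L, U, β fixed, the unique positive solution α_k of Equation (3) converges to the unique positive real α_∞ satisfying L/U + c − 1 = (1/α_∞ + c − 1)·e^{1/α_∞}, where c = 2β/U. -/
open Filter Real Set

noncomputable def fAux (c x : ℝ) : ℝ := (x + c - 1) * Real.exp x

lemma fAux_mono {c : ℝ} (hc : 0 < c) : StrictMonoOn (fAux c) (Set.Ici 0) := by
  have hderiv : ∀ x : ℝ, HasDerivAt (fAux c) ((x + c) * Real.exp x) x := by
    intro x
    have h1 : HasDerivAt (fun x : ℝ => x + c - 1) 1 x := by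
      simpa [add_sub_assoc] using (hasDerivAt_id x).add_const (c - 1)
    have h2 : HasDerivAt (fun y : ℝ => (y + c - 1) * Real.exp y)
        (1 * Real.exp x + (x + c - 1) * Real.exp x) x := h1.mul (Real.hasDerivAt_exp x)
    convert h2 using 1
    rfl
    ring
  apply strictMonoOn_of_deriv_pos (convex_Ici 0)
  · exact (Continuous.continuousOn (by unfold fAux; fun_prop))
  · intro x hx
    rw [interior_Ici] at hx
    rw [(hderiv x).deriv]
    exact mul_pos (by linarith [hx.out]) (Real.exp_pos x)

noncomputable def Gfun (U β : ℝ) (k : ℕ) (a : ℝ) : ℝ :=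
  (U * (1 - 1 / a) - 2 * β * (1 - 1 / (k : ℝ) + 1 / ((k : ℝ) * a)))
    * (1 + 1 / ((k : ℝ) * a)) ^ k

lemma Gfun_tendsto (U β a : ℝ) (ha : 0 < a) :
    Tendsto (fun k : ℕ => Gfun U β k a) atTop
      (nhds ((U * (1 - 1 / a) - 2 * β) * Real.exp (1 / a))) := by
  have hpow : Tendsto (fun k : ℕ => (1 + 1 / ((k : ℝ) * a)) ^ k) atTop
      (nhds (Real.exp (1 / a))) := by
    have h := Real.tendsto_one_add_div_pow_exp (1 / a)
    convert h using 3 with k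
    rw [one_div, one_div, mul_inv, div_eq_mul_inv, mul_comm]
  have hz : Tendsto (fun k : ℕ => 1 / (k : ℝ)) atTop (nhds 0) :=
    tendsto_one_div_atTop_nhds_zero_nat
  have hz2 : Tendsto (fun k : ℕ => 1 / ((k : ℝ) * a)) atTop (nhds 0) := by
    have : (fun k : ℕ => 1 / ((k : ℝ) * a)) = fun k : ℕ => (1 / (k : ℝ)) * (1 / a) := by
      funext k; rw [div_mul_div_comm, one_mul]
    rw [this]
    simpa using hz.mul_const (1 / a)
  have hcoef : Tendsto (fun k : ℕ =>
      U * (1 - 1 / a) - 2 * β * (1 - 1 / (k : ℝ) + 1 / ((k : ℝ) * a))) atTop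
      (nhds (U * (1 - 1 / a) - 2 * β)) := by
    have := tendsto_const_nhds (x := U * (1 - 1 / a)) (f := atTop (α := ℕ)) |>.sub
      ((tendsto_const_nhds (x := (2 * β)) (f := atTop (α := ℕ))).mul
        (((tendsto_const_nhds (x := (1:ℝ))).sub hz).add hz2))
    simpa using this
  simpa [Gfun] using hcoef.mul hpow

lemma Gfun_contOn (U β : ℝ) (k : ℕ) (hk : 1 ≤ k) {s : Set ℝ} (hs : ∀ a ∈ s, 0 < a) :
    ContinuousOn (fun a => Gfun U β k a) s := by
  have hne : ∀ a ∈ s, a ≠ 0 := fun a ha => ne_of_gt (hs a ha)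
  have hkne : ∀ a ∈ s, (k : ℝ) * a ≠ 0 := by
    intro a ha
    have : (0:ℝ) < k := by exact_mod_cast hk
    exact ne_of_gt (mul_pos this (hs a ha))
  unfold Gfun
  apply ContinuousOn.mul
  · apply ContinuousOn.sub
    · exact continuousOn_const.mul (continuousOn_const.sub
        (continuousOn_const.div continuousOn_id hne))
    · exact continuousOn_const.mul ((continuousOn_const.sub continuousOn_const).add
        (continuousOn_const.div (continuousOn_const.mul continuousOn_id) hkne))
  · exact (continuousOn_const.add
      (continuousOn_const.div (continuousOn_const.mul continuousOn_id) hkne)).pow k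

set_option maxHeartbeats 1000000 in
/-- **Corollary 4.3(b).** As `k → ∞`, the unique positive solution `α_k` of
Equation (3) converges to the unique positive real `α_∞` satisfying
`L/U + c − 1 = (1/α_∞ + c − 1)·e^{1/α_∞}`, where `c = 2β/U`. -/
theorem alpha_limit
    (L U : ℝ) (hL : 0 < L) (hLU : L < U)
    (β : ℝ) (hβ : 0 < 2 * β) (hβUL : 2 * β < U - L)
    (αseq : ℕ → ℝ)
    (hsol : ∀ k : ℕ, 1 ≤ k →
      0 < αseq k ∧
        U - L - 2 * β
          = (U * (1 - 1 / αseq k)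
              - 2 * β * (1 - 1 / (k : ℝ) + 1 / ((k : ℝ) * αseq k)))
              * (1 + 1 / ((k : ℝ) * αseq k)) ^ k)
    (huniq : ∀ k : ℕ, 1 ≤ k → ∀ a : ℝ, 0 < a →
      U - L - 2 * β
          = (U * (1 - 1 / a) - 2 * β * (1 - 1 / (k : ℝ) + 1 / ((k : ℝ) * a)))
              * (1 + 1 / ((k : ℝ) * a)) ^ k → a = αseq k) :
    ∃ αinf : ℝ, 0 < αinf ∧
      (L / U + 2 * β / U - 1
        = (1 / αinf + 2 * β / U - 1) * Real.exp (1 / αinf)) ∧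
      (∀ a : ℝ, 0 < a →
        L / U + 2 * β / U - 1 = (1 / a + 2 * β / U - 1) * Real.exp (1 / a) →
        a = αinf) ∧
      Tendsto αseq atTop (nhds αinf) := by
  have hU : 0 < U := lt_trans hL hLU
  set c : ℝ := 2 * β / U with hcdef
  have hc0 : 0 < c := div_pos hβ hU
  have hc1 : c < 1 := by
    rw [hcdef, div_lt_one hU]; linarith
  have hUc : U * c = 2 * β := by
    rw [hcdef]; field_simp
  set T : ℝ := L / U + c - 1 with hTdef
  have hTeq : T = (L + 2 * β - U) / U := by
    rw [hTdef, hcdef]; field_simp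
  have hT0 : T < 0 := by
    rw [hTeq]; exact div_neg_of_neg_of_pos (by linarith) hU
  have hTc : c - 1 < T := by
    have : 0 < L / U := div_pos hL hU
    rw [hTdef]; linarith
  have hmono := fAux_mono hc0
  -- IVT for the limit equation
  have hcont : ContinuousOn (fAux c) (Icc 0 (1 - c)) :=
    (Continuous.continuousOn (by unfold fAux; fun_prop))
  have hf0 : fAux c 0 = c - 1 := by simp [fAux]
  have hf1 : fAux c (1 - c) = 0 := by simp [fAux]
  have hIoo : T ∈ Ioo (fAux c 0) (fAux c (1 - c)) := by
    rw [hf0, hf1]; exact ⟨hTc, hT0⟩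
  obtain ⟨x, hxmem, hfx⟩ := intermediate_value_Ioo (by linarith : (0:ℝ) ≤ 1 - c) hcont hIoo
  have hx0 : 0 < x := hxmem.1
  refine ⟨1 / x, by positivity, ?_, ?_, ?_⟩
  · rw [one_div_one_div]
    exact hfx.symm
  · intro a ha heq
    have h1 : fAux c (1 / a) = fAux c x := by
      rw [fAux, hfx]; exact heq.symm
    have h2 : 1 / a = x :=
      hmono.injOn (Set.mem_Ici.mpr (by positivity)) (Set.mem_Ici.mpr hx0.le) h1
    rw [← h2, one_div_one_div]
  · -- convergence
    rw [Metric.tendsto_atTop]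
    intro ε hε
    set A : ℝ := 1 / x with hAdef
    have hA : 0 < A := by positivity
    set δ : ℝ := min (ε / 2) (A / 2) with hδdef
    have hδ0 : 0 < δ := lt_min (by linarith) (by linarith)
    have hδε : δ < ε := lt_of_le_of_lt (min_le_left _ _) (by linarith)
    have hδA : δ ≤ A / 2 := min_le_right _ _
    set lo : ℝ := A - δ with hlodef
    set hi : ℝ := A + δ with hhidef
    have hlo0 : 0 < lo := by rw [hlodef]; linarith
    have hhi0 : 0 < hi := by rw [hhidef]; linarith
    have hloA : lo < A := by rw [hlodef]; linarith
    have hAhi : A < hi := by rw [hhidef]; linarith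
    -- sign facts for the limit function
    have hxlo : x < 1 / lo := by
      have := one_div_lt_one_div_of_lt hlo0 hloA
      rwa [hAdef, one_div_one_div] at this
    have hhix : 1 / hi < x := by
      have := one_div_lt_one_div_of_lt hA hAhi
      rwa [hAdef, one_div_one_div] at this
    have hflo : T < fAux c (1 / lo) := by
      rw [← hfx]
      exact hmono (Set.mem_Ici.mpr hx0.le) (Set.mem_Ici.mpr (by positivity)) hxlo
    have hfhi : fAux c (1 / hi) < T := by
      rw [← hfx]
      exact hmono (Set.mem_Ici.mpr (by positivity)) (Set.mem_Ici.mpr hx0.le) hhix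
    -- translate to the G limit values
    have hGlo : (U * (1 - 1 / lo) - 2 * β) * Real.exp (1 / lo) < U - L - 2 * β := by
      have h1 : (U * (1 - 1 / lo) - 2 * β) * Real.exp (1 / lo)
          = -U * fAux c (1 / lo) := by
        rw [fAux, ← hUc]; ring
      have h2 : U - L - 2 * β = -U * T := by
        rw [hTdef, ← hUc]; field_simp; ring
      rw [h1, h2]
      have := mul_lt_mul_of_pos_left hflo hU
      nlinarith
    have hGhi : U - L - 2 * β < (U * (1 - 1 / hi) - 2 * β) * Real.exp (1 / hi) := by
      have h1 : (U * (1 - 1 / hi) - 2 * β) * Real.exp (1 / hi)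
          = -U * fAux c (1 / hi) := by
        rw [fAux, ← hUc]; ring
      have h2 : U - L - 2 * β = -U * T := by
        rw [hTdef, ← hUc]; field_simp; ring
      rw [h1, h2]
      nlinarith [mul_lt_mul_of_pos_left hfhi hU]
    -- eventual sign facts for G k
    have hev1 : ∀ᶠ k : ℕ in atTop, Gfun U β k lo < U - L - 2 * β :=
      (Gfun_tendsto U β lo hlo0).eventually_lt_const hGlo
    have hev2 : ∀ᶠ k : ℕ in atTop, U - L - 2 * β < Gfun U β k hi :=
      (Gfun_tendsto U β hi hhi0).eventually_const_lt hGhi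
    have hev := (hev1.and hev2).and (eventually_ge_atTop 1)
    rw [eventually_atTop] at hev
    obtain ⟨N, hN⟩ := hev
    refine ⟨N, fun n hn => ?_⟩
    obtain ⟨⟨hlt, hgt⟩, hn1⟩ := hN n hn
    have hcontn : ContinuousOn (fun a => Gfun U β n a) (Icc lo hi) :=
      Gfun_contOn U β n hn1 (fun a ha => lt_of_lt_of_le hlo0 ha.1)
    have hmem : U - L - 2 * β ∈ Icc (Gfun U β n lo) (Gfun U β n hi) :=
      ⟨le_of_lt hlt, le_of_lt hgt⟩
    obtain ⟨a, haI, hfa⟩ := intermediate_value_Icc (by linarith : lo ≤ hi) hcontn hmem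
    have ha0 : 0 < a := lt_of_lt_of_le hlo0 haI.1
    have haeq : a = αseq n := by
      apply huniq n hn1 a ha0
      unfold Gfun at hfa
      exact hfa.symm
    rw [Real.dist_eq, ← haeq]
    rw [abs_lt]
    constructor
    · have := haI.1; rw [hlodef] at this; linarith
    · have := haI.2; rw [hhidef] at this; linarith
end

section
/- As k → ∞ with L, U, β fixed, the unique positive solution ω_k of Equation (4) converges to the unique real ω_∞ > 1 + b satisfying θ − 1 − b = (ω_∞ − 1 − b)·e^{ω_∞}, where b = 2β/L and θ = U/L. -/
set_option maxHeartbeats 1000000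

open Filter

private lemma gmono (L β : ℝ) (k : ℕ) (hk : 1 ≤ k) (hkL : 2 * β < (k : ℝ) * L)
    (x y : ℝ) (hx : 0 < x) (hxy : x ≤ y)
    (hA : 0 < L * (x - 1) - 2 * β * (1 - 1 / (k : ℝ) + x / (k : ℝ))) :
    (L * (x - 1) - 2 * β * (1 - 1 / (k : ℝ) + x / (k : ℝ))) * (1 + x / (k : ℝ)) ^ k
      ≤ (L * (y - 1) - 2 * β * (1 - 1 / (k : ℝ) + y / (k : ℝ))) * (1 + y / (k : ℝ)) ^ k := by
  have hk0 : (0:ℝ) < (k : ℝ) := by exact_mod_cast hk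
  have hslope : 2 * β / (k : ℝ) < L := by
    rw [div_lt_iff₀ hk0]; linarith [hkL]
  have hAy : L * (x - 1) - 2 * β * (1 - 1 / (k : ℝ) + x / (k : ℝ))
      ≤ L * (y - 1) - 2 * β * (1 - 1 / (k : ℝ) + y / (k : ℝ)) := by
    have h1 : 2 * β * (y / (k:ℝ)) - 2 * β * (x / (k:ℝ)) = (2 * β / (k:ℝ)) * (y - x) := by
      field_simp
    nlinarith [mul_le_mul_of_nonneg_right hslope.le (sub_nonneg.2 hxy)]
  have hxk : (0:ℝ) ≤ 1 + x / (k:ℝ) := by positivity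
  have hpow : (1 + x / (k : ℝ)) ^ k ≤ (1 + y / (k : ℝ)) ^ k := by
    apply pow_le_pow_left₀ hxk
    have : x / (k:ℝ) ≤ y / (k:ℝ) := (div_le_div_iff_of_pos_right hk0).2 hxy
    linarith
  exact mul_le_mul hAy hpow (by positivity) (lt_of_lt_of_le hA hAy).le


private lemma glim (L β w : ℝ) :
    Tendsto (fun k : ℕ => (L * (w - 1) - 2 * β * (1 - 1 / (k : ℝ) + w / (k : ℝ)))
        * (1 + w / (k : ℝ)) ^ k) atTop (nhds ((L * (w - 1) - 2 * β) * Real.exp w)) := by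
  have h1 : Tendsto (fun k : ℕ => L * (w - 1) - 2 * β * (1 - 1 / (k : ℝ) + w / (k : ℝ)))
      atTop (nhds (L * (w - 1) - 2 * β * (1 - 0 + 0))) :=
    tendsto_const_nhds.sub (tendsto_const_nhds.mul
      ((tendsto_const_nhds.sub tendsto_one_div_atTop_nhds_zero_nat).add
        (tendsto_const_div_atTop_nhds_zero_nat w)))
  have h2 := Real.tendsto_one_add_div_pow_exp w
  simpa using h1.mul h2

/-- **Corollary 4.4(b).** As `k → ∞`, the unique positive solution `ω_k` of
Equation (4) converges to the unique real `ω_∞ > 1 + b` satisfying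
`θ − 1 − b = (ω_∞ − 1 − b)·e^{ω_∞}`, where `b = 2β/L` and `θ = U/L`. -/
theorem omega_limit
    (L U : ℝ) (hL : 0 < L) (hLU : L < U)
    (β : ℝ) (hβ : 0 < 2 * β) (hβUL : 2 * β < U - L)
    (ωseq : ℕ → ℝ)
    (hsol : ∀ k : ℕ, 1 ≤ k → 2 * β < (k : ℝ) * L →
      0 < ωseq k ∧
        U - L - 2 * β
          = (L * (ωseq k - 1) - 2 * β * (1 - 1 / (k : ℝ) + ωseq k / (k : ℝ)))
              * (1 + ωseq k / (k : ℝ)) ^ k)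
    (huniq : ∀ k : ℕ, 1 ≤ k → 2 * β < (k : ℝ) * L → ∀ w : ℝ, 0 < w →
      U - L - 2 * β
          = (L * (w - 1) - 2 * β * (1 - 1 / (k : ℝ) + w / (k : ℝ)))
              * (1 + w / (k : ℝ)) ^ k → w = ωseq k) :
    ∃ ωinf : ℝ, 1 + 2 * β / L < ωinf ∧
      (U / L - 1 - 2 * β / L
        = (ωinf - 1 - 2 * β / L) * Real.exp ωinf) ∧
      (∀ w : ℝ, 1 + 2 * β / L < w →
        U / L - 1 - 2 * β / L = (w - 1 - 2 * β / L) * Real.exp w →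
        w = ωinf) ∧
      Tendsto ωseq atTop (nhds ωinf) := by
  have hL0 : L ≠ 0 := ne_of_gt hL
  set b := 2 * β / L with hbdef
  have hb : 0 < b := by positivity
  have hLb : L * b = 2 * β := by rw [hbdef]; field_simp
  have hfac : ∀ w : ℝ, L * (w - 1) - 2 * β = L * (w - 1 - b) := by
    intro w; rw [← hLb]; ring
  have hc : 0 < U / L - 1 - b := by
    have h : U / L - 1 - b = (U - L - 2 * β) / L := by field_simp [hbdef]; linarith [hLb]
    rw [h]; exact div_pos (by linarith) hL
  set c : ℝ := U / L - 1 - b with hcdef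
  set f : ℝ → ℝ := fun w => (w - 1 - b) * Real.exp w with hfdef
  have hmono : StrictMonoOn f (Set.Ici (1 + b)) := by
    intro x hx y hy hxy
    have hx' : 1 + b ≤ x := hx
    have h1 : Real.exp x < Real.exp y := Real.exp_lt_exp.2 hxy
    have h2 : 0 < Real.exp x := Real.exp_pos x
    have h3 : 0 < Real.exp y := Real.exp_pos y
    simp only [hfdef]
    nlinarith [mul_lt_mul_of_pos_right (show x - 1 - b < y - 1 - b by linarith) h3,
      mul_le_mul_of_nonneg_left h1.le (show (0:ℝ) ≤ x - 1 - b by linarith)]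
  have hcont : ContinuousOn f (Set.Icc (1 + b) (1 + b + c)) := by
    apply Continuous.continuousOn; fun_prop
  have hIVT := intermediate_value_Icc (by linarith : (1 + b : ℝ) ≤ 1 + b + c) hcont
  have hcmem : c ∈ Set.Icc (f (1 + b)) (f (1 + b + c)) := by
    constructor
    · simp [hfdef]; linarith
    · have h1 : (1:ℝ) ≤ Real.exp (1 + b + c) := Real.one_le_exp (by linarith)
      simp only [hfdef]
      nlinarith
  obtain ⟨ωinf, hωmem, hωeq⟩ := hIVT hcmem
  have hωgt : 1 + b < ωinf := by
    rcases lt_or_eq_of_le hωmem.1 with h | h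
    · exact h
    · exfalso
      rw [← h] at hωeq
      simp [hfdef] at hωeq
      linarith
  refine ⟨ωinf, hωgt, ?_, ?_, ?_⟩
  · simpa [hfdef, eq_comm] using hωeq
  · intro w hw heq
    have h1 : f w = f ωinf := by rw [hωeq]; simp [hfdef, ← heq]
    exact hmono.injOn (Set.mem_Ici.2 hw.le) (Set.mem_Ici.2 hωgt.le) h1
  · rw [Metric.tendsto_atTop]
    intro ε hε
    set ε' : ℝ := min ε ((ωinf - (1 + b)) / 2) with hε'def
    have hε'pos : 0 < ε' := lt_min hε (by linarith)
    have hε'le : ε' ≤ ε := min_le_left _ _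
    have hwm : 1 + b < ωinf - ε' := by
      have := min_le_right ε ((ωinf - (1 + b)) / 2)
      simp only [hε'def]
      linarith
    have hflo : f (ωinf - ε') < c := by
      rw [← hωeq]
      exact hmono (Set.mem_Ici.2 hwm.le) (Set.mem_Ici.2 hωgt.le) (by linarith)
    have hfhi : c < f (ωinf + ε') := by
      rw [← hωeq]
      exact hmono (Set.mem_Ici.2 hωgt.le) (Set.mem_Ici.2 (by linarith)) (by linarith)
    have hlim : ∀ w : ℝ, Tendsto (fun k : ℕ =>
        (L * (w - 1) - 2 * β * (1 - 1 / (k : ℝ) + w / (k : ℝ))) * (1 + w / (k : ℝ)) ^ k)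
        atTop (nhds (L * f w)) := by
      intro w
      have := glim L β w
      rwa [hfac w, show L * (w - 1 - b) * Real.exp w = L * f w by simp [hfdef]; ring] at this
    have hev1 : ∀ᶠ k : ℕ in atTop,
        (L * ((ωinf - ε') - 1) - 2 * β * (1 - 1 / (k : ℝ) + (ωinf - ε') / (k : ℝ)))
          * (1 + (ωinf - ε') / (k : ℝ)) ^ k < U - L - 2 * β := by
      apply (hlim (ωinf - ε')).eventually_lt_const
      have h := mul_lt_mul_of_pos_left hflo hL
      have : L * c = U - L - 2 * β := by rw [hcdef]; field_simp [hbdef]; linarith [hLb]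
      linarith
    have hev2 : ∀ᶠ k : ℕ in atTop,
        U - L - 2 * β < (L * ((ωinf + ε') - 1) - 2 * β * (1 - 1 / (k : ℝ) + (ωinf + ε') / (k : ℝ)))
          * (1 + (ωinf + ε') / (k : ℝ)) ^ k := by
      apply (hlim (ωinf + ε')).eventually_const_lt
      have h := mul_lt_mul_of_pos_left hfhi hL
      have : L * c = U - L - 2 * β := by rw [hcdef]; field_simp [hbdef]; linarith [hLb]
      linarith
    have hev3 : ∀ᶠ k : ℕ in atTop, 2 * β < (k : ℝ) * L := by
      have h := tendsto_natCast_atTop_atTop (R := ℝ)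
      filter_upwards [h.eventually_gt_atTop (2 * β / L)] with k hk
      rw [div_lt_iff₀ hL] at hk; linarith
    have hev4 : ∀ᶠ k : ℕ in atTop, 1 ≤ k := eventually_ge_atTop 1
    obtain ⟨N, hN⟩ := eventually_atTop.1 (((hev1.and hev2).and hev3).and hev4)
    refine ⟨N, fun n hn => ?_⟩
    obtain ⟨⟨⟨h1, h2⟩, h3⟩, h4⟩ := hN n hn
    obtain ⟨hpos, heq⟩ := hsol n h4 h3
    have hn0 : (0:ℝ) < (n : ℝ) := by exact_mod_cast h4
    -- the A coefficient at the solution point is positive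
    have hApos : 0 < L * (ωseq n - 1) - 2 * β * (1 - 1 / (n : ℝ) + ωseq n / (n : ℝ)) := by
      by_contra hcon
      push_neg at hcon
      have hpow : (0:ℝ) < (1 + ωseq n / (n : ℝ)) ^ n := by positivity
      nlinarith [mul_nonpos_of_nonpos_of_nonneg hcon hpow.le]
    -- upper bound : ωseq n < ωinf + ε'
    have hub : ωseq n < ωinf + ε' := by
      by_contra hcon
      push_neg at hcon
      have hA2 : 0 < L * ((ωinf + ε') - 1)
          - 2 * β * (1 - 1 / (n : ℝ) + (ωinf + ε') / (n : ℝ)) := by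
        by_contra hcon2
        push_neg at hcon2
        have hpow : (0:ℝ) < (1 + (ωinf + ε') / (n : ℝ)) ^ n := by
          apply pow_pos
          have := div_pos (show (0:ℝ) < ωinf + ε' by linarith) hn0
          linarith
        nlinarith [mul_nonpos_of_nonpos_of_nonneg hcon2 hpow.le]
      have := gmono L β n h4 h3 (ωinf + ε') (ωseq n) (by linarith) hcon hA2
      linarith
    -- lower bound : ωinf - ε' < ωseq n
    have hlb : ωinf - ε' < ωseq n := by
      by_contra hcon
      push_neg at hcon
      have := gmono L β n h4 h3 (ωseq n) (ωinf - ε') hpos hcon hApos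
      linarith
    rw [Real.dist_eq, abs_lt]
    constructor <;> linarith
end
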